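/- arXiv:1709.04968 — 5 statements merged into one kernel-verified Lean document; each statement's English description precedes it below -/
import Mathlib

section
/- Let A be an (n×n) complex Hermitian matrix with eigenvalues λ = (λ_1, …, λ_n) ∈ ℝ^n (listed with multiplicity). Then the diagonal of A (whose entries are real since A is Hermitian) is majorized by λ: diag(A) ≺ λ. Concretely, for every subset S of indices with |S| = k, the sum ∑_{i∈S} A_{ii} is at most the sum of the k largest eigenvalues of A, and ∑_{i=1}^n A_{ii} = ∑_{i=1}^n λ_i. -/
/-!
Write `A = U D Uᴴ` with `U` unitary and `D` the diagonal of eigenvalues. Then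
`A i i = ∑ j, |U i j|² λ j`, and the matrix `(|U i j|²)` is doubly stochastic because the rows
and columns of `U` are unit vectors. So it suffices that `M x ≺ x` for every doubly stochastic `M`:
a sum of `k` entries of `M x` is `∑ j, c j * x j` with weights `0 ≤ c j ≤ 1` summing to `k`, and
such a weighted sum is at most the sum of the `k` largest `x j`.
-/

open scoped BigOperators

/-- Vector majorization: `y ≺ x` iff every partial sum of `y` over a subset of
cardinality `k` is at most the sum of the `k` largest entries of `x`
(equivalently, is at most the sum of `x` over *some* subset of cardinality `k`),
and the total sums agree. -/
def IsMajorizedBy {n : ℕ} (y x : Fin n → ℝ) : Prop :=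
  (∀ S : Finset (Fin n), ∃ T : Finset (Fin n), T.card = S.card ∧
      ∑ i ∈ S, y i ≤ ∑ i ∈ T, x i) ∧
  ∑ i, y i = ∑ i, x i

open Finset Matrix

section TopSum

variable {ι : Type*} [Fintype ι]

theorem sum_mul_le_sum_of_threshold {x c : ι → ℝ} {T : Finset ι} {t : ℝ}
    (hc0 : ∀ j, 0 ≤ c j) (hc1 : ∀ j, c j ≤ 1) (hc : ∑ j, c j = #T)
    (hT : ∀ j ∈ T, t ≤ x j) (hTc : ∀ j ∉ T, x j ≤ t) :
    ∑ j, c j * x j ≤ ∑ j ∈ T, x j := by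
  classical
  have hterm : ∀ j, (c j - if j ∈ T then 1 else 0) * (x j - t) ≤ 0 := fun j => by
    split_ifs with hj
    · exact mul_nonpos_of_nonpos_of_nonneg (by linarith [hc1 j]) (by linarith [hT j hj])
    · exact mul_nonpos_of_nonneg_of_nonpos (by linarith [hc0 j]) (by linarith [hTc j hj])
  -- `∑ j, c j = #T` lets the threshold `t` be subtracted from every `x j` for free.
  have hsum : ∑ j, (c j - if j ∈ T then 1 else 0) * (x j - t)
      = ∑ j, c j * x j - ∑ j ∈ T, x j := by
    simp only [sub_mul, mul_sub, sum_sub_distrib, ← sum_mul, hc, ite_mul, one_mul,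
      zero_mul, sum_ite_mem, univ_inter, sum_const, nsmul_eq_mul]
    ring
  linarith [sum_nonpos fun j (_ : j ∈ univ) => hterm j]

theorem exists_card_eq_threshold (x : ι → ℝ) {k : ℕ} (hk : k ≤ Fintype.card ι) :
    ∃ T : Finset ι, #T = k ∧ ∃ t, (∀ j ∈ T, t ≤ x j) ∧ ∀ j ∉ T, x j ≤ t := by
  classical
  induction k with
  | zero =>
    obtain ⟨t, ht⟩ := (Set.finite_range x).bddAbove
    exact ⟨∅, rfl, t, by simp, fun j _ => ht ⟨j, rfl⟩⟩
  | succ k ih =>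
    obtain ⟨T, hT, t, hge, hle⟩ := ih (by omega)
    have hne : Tᶜ.Nonempty := by
      rw [← card_pos, card_compl]; omega
    obtain ⟨m, hm, hmax⟩ := Tᶜ.exists_max_image x hne
    rw [mem_compl] at hm
    refine ⟨insert m T, by rw [card_insert_of_notMem hm, hT], x m, ?_, ?_⟩
    · simp only [mem_insert, forall_eq_or_imp, le_refl, true_and]
      exact fun j hj => (hle m hm).trans (hge j hj)
    · intro j hj
      rw [mem_insert, not_or] at hj
      exact hmax j (mem_compl.mpr hj.2)

theorem exists_card_eq_sum_mul_le_sum (x : ι → ℝ) {c : ι → ℝ} {k : ℕ}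
    (hc0 : ∀ j, 0 ≤ c j) (hc1 : ∀ j, c j ≤ 1) (hc : ∑ j, c j = k) :
    ∃ T : Finset ι, #T = k ∧ ∑ j, c j * x j ≤ ∑ j ∈ T, x j := by
  have hk : k ≤ Fintype.card ι := by
    have : (k : ℝ) ≤ Fintype.card ι := by
      simpa [← hc] using sum_le_sum fun j (_ : j ∈ univ) => hc1 j
    exact_mod_cast this
  obtain ⟨T, hT, t, hge, hle⟩ := exists_card_eq_threshold x hk
  exact ⟨T, hT, sum_mul_le_sum_of_threshold hc0 hc1 (by rw [hc, hT]) hge hle⟩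

end TopSum

theorem isMajorizedBy_mulVec_of_mem_doublyStochastic {n : ℕ} {M : Matrix (Fin n) (Fin n) ℝ}
    (hM : M ∈ doublyStochastic ℝ (Fin n)) (x : Fin n → ℝ) : IsMajorizedBy (M *ᵥ x) x := by
  refine ⟨fun S => ?_, sum_mulVec_of_mem_doublyStochastic hM⟩
  have hc : ∑ j, ∑ i ∈ S, M i j = #S := by
    rw [sum_comm]
    simp [sum_row_of_mem_doublyStochastic hM]
  obtain ⟨T, hT, hle⟩ := exists_card_eq_sum_mul_le_sum x
    (fun j => sum_nonneg fun i _ => nonneg_of_mem_doublyStochastic hM)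
    (fun j => (sum_le_sum_of_subset_of_nonneg (subset_univ S) fun i _ _ =>
      nonneg_of_mem_doublyStochastic hM).trans_eq (sum_col_of_mem_doublyStochastic hM j))
    hc
  refine ⟨T, hT, le_of_eq_of_le ?_ hle⟩
  simp only [mulVec, dotProduct, sum_mul]
  exact sum_comm

namespace Matrix

variable {𝕜 n : Type*} [RCLike 𝕜] [Fintype n] [DecidableEq n]

theorem sum_norm_sq_row_of_mem_unitaryGroup {U : Matrix n n 𝕜} (hU : U ∈ unitaryGroup n 𝕜)
    (i : n) : ∑ j, ‖U i j‖ ^ 2 = 1 := by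
  have h : (U * Uᴴ) i i = 1 := by
    rw [← star_eq_conjTranspose, mem_unitaryGroup_iff.mp hU, one_apply_eq]
  simp only [mul_apply, conjTranspose_apply, ← starRingEnd_apply, RCLike.mul_conj] at h
  exact_mod_cast h

theorem of_norm_sq_mem_doublyStochastic {U : Matrix n n 𝕜} (hU : U ∈ unitaryGroup n 𝕜) :
    (of fun i j => ‖U i j‖ ^ 2) ∈ doublyStochastic ℝ n := by
  refine mem_doublyStochastic_iff_sum.mpr ⟨fun i j => sq_nonneg _,
    sum_norm_sq_row_of_mem_unitaryGroup hU, fun j => ?_⟩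
  simpa using sum_norm_sq_row_of_mem_unitaryGroup (Unitary.star_mem hU) j

theorem IsHermitian.re_diag_eq_mulVec_eigenvalues {A : Matrix n n 𝕜} (hA : A.IsHermitian) :
    (fun i => RCLike.re (A i i)) =
      (of fun i j => ‖(hA.eigenvectorUnitary : Matrix n n 𝕜) i j‖ ^ 2) *ᵥ hA.eigenvalues := by
  ext i
  set U : Matrix n n 𝕜 := (hA.eigenvectorUnitary : Matrix n n 𝕜)
  have hAii : A i i = ∑ j, (hA.eigenvalues j : 𝕜) * (U i j * starRingEnd 𝕜 (U i j)) := by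
    conv_lhs => rw [hA.spectral_theorem]
    rw [Unitary.conjStarAlgAut_apply, mul_apply]
    refine sum_congr rfl fun j _ => ?_
    rw [mul_diagonal, star_apply, RCLike.star_def, Function.comp_apply]
    ring
  simp only [hAii, RCLike.mul_conj, mulVec, dotProduct, of_apply]
  norm_cast
  simp only [mul_comm]

end Matrix

/-- **Schur's theorem**: the diagonal of a Hermitian matrix is majorized by its
eigenvalues. -/
theorem schur_diag_majorized_by_eigenvalues {n : ℕ}
    (A : Matrix (Fin n) (Fin n) ℂ) (hA : A.IsHermitian) :
    IsMajorizedBy (fun i => (A i i).re) hA.eigenvalues := by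
  have hdiag : (fun i => (A i i).re) = _ := hA.re_diag_eq_mulVec_eigenvalues
  rw [hdiag]
  exact isMajorizedBy_mulVec_of_mem_doublyStochastic
    (Matrix.of_norm_sq_mem_doublyStochastic hA.eigenvectorUnitary.2) _
end

section
/- (Rado's theorem) For every x ∈ ℝ^n, the set {y ∈ ℝ^n : y ≺ x} equals the convex hull of the orbit of x under the symmetric group, i.e. the convex hull of the finite set {(x_{σ(1)}, …, x_{σ(n)}) : σ a permutation of {1,…,n}}. -/
open scoped BigOperators

/-!
Permutations of `x` are majorized by `x`, and majorization by `x` is a convex condition, so the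
hull of the orbit lies in `{y | y ≺ x}`. Conversely the hull is compact and convex, so it is
enough to beat every linear functional `y ↦ ∑ cᵢ yᵢ` at `y` by a permutation of `x`. Pair the
decreasing rearrangements of `c` and `x`: summation by parts along the decreasing order of `c`
reduces the comparison to inequalities between partial sums, which majorization provides.
-/

open Finset

section PartialSums

variable {ι : Type*}

theorem Finset.sum_le_sum_of_card_eq_of_forall_le {M : Type*} [AddCommMonoid M] [LinearOrder M]
    [IsOrderedAddMonoid M] {A B : Finset ι} {f : ι → M} (hcard : #A = #B)
    (hf : ∀ a ∈ A, ∀ b ∈ B, f a ≤ f b) : ∑ a ∈ A, f a ≤ ∑ b ∈ B, f b := by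
  rcases B.eq_empty_or_nonempty with rfl | hB
  · simp [card_eq_zero.mp hcard]
  calc ∑ a ∈ A, f a ≤ #A • B.inf' hB f :=
        sum_le_card_nsmul _ _ _ fun a ha => le_inf' hB f (hf a ha)
    _ = #B • B.inf' hB f := by rw [hcard]
    _ ≤ ∑ b ∈ B, f b := card_nsmul_le_sum _ _ _ fun b hb => inf'_le f hb

variable [LinearOrder ι]

theorem Antitone.sum_le_sum_of_isLowerSet {f : ι → ℝ} (hf : Antitone f) {P T : Finset ι}
    (hP : IsLowerSet (P : Set ι)) (hcard : #T = #P) : ∑ i ∈ T, f i ≤ ∑ i ∈ P, f i := by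
  refine sum_sdiff_le_sum_sdiff.mp <|
    sum_le_sum_of_card_eq_of_forall_le (card_sdiff_comm hcard) fun a ha b hb => hf ?_
  exact not_lt.mp fun hab => (mem_sdiff.mp ha).2 (hP hab.le (mem_sdiff.mp hb).1)

theorem Finset.mul_sum_le_sum_mul_of_partialSums_nonneg {s : Finset ι} {d h : ι → ℝ} {m : ℝ}
    (hd : AntitoneOn d s) (hm : ∀ i ∈ s, m ≤ d i)
    (hh : ∀ i ∈ s, 0 ≤ ∑ j ∈ s with j ≤ i, h j) :
    m * ∑ i ∈ s, h i ≤ ∑ i ∈ s, d i * h i := by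
  induction s using Finset.induction_on_max generalizing m with
  | empty => simp
  | insert a s hlt ih =>
    have ha : a ∉ s := fun has => (hlt a has).false
    have hprefix (i : ι) (hi : i ∈ s) :
        ∑ j ∈ insert a s with j ≤ i, h j = ∑ j ∈ s with j ≤ i, h j := by
      rw [filter_insert, if_neg (hlt i hi).not_ge]
    have htotal : ∑ j ∈ insert a s with j ≤ a, h j = ∑ j ∈ insert a s, h j := by
      rw [filter_true_of_mem fun j hj => (mem_insert.mp hj).elim le_of_eq fun hj => (hlt j hj).le]
    have hs : d a * ∑ i ∈ s, h i ≤ ∑ i ∈ s, d i * h i :=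
      ih (hd.mono (subset_insert a s))
        (fun i hi => hd (mem_insert_of_mem hi) (mem_insert_self a s) (hlt i hi).le)
        (fun i hi => hprefix i hi ▸ hh i (mem_insert_of_mem hi))
    calc m * ∑ i ∈ insert a s, h i ≤ d a * ∑ i ∈ insert a s, h i :=
          mul_le_mul_of_nonneg_right (hm a (mem_insert_self a s))
            (htotal ▸ hh a (mem_insert_self a s))
      _ = d a * h a + d a * ∑ i ∈ s, h i := by rw [sum_insert ha, mul_add]
      _ ≤ d a * h a + ∑ i ∈ s, d i * h i := by gcongr
      _ = ∑ i ∈ insert a s, d i * h i := by rw [sum_insert ha]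

theorem sum_mul_le_sum_mul_of_partialSums_le [Fintype ι] {d u v : ι → ℝ} (hd : Antitone d)
    (hle : ∀ i, ∑ j with j ≤ i, u j ≤ ∑ j with j ≤ i, v j) (heq : ∑ i, u i = ∑ i, v i) :
    ∑ i, d i * u i ≤ ∑ i, d i * v i := by
  obtain ⟨m, hm⟩ := (Set.finite_range d).bddBelow
  have := mul_sum_le_sum_mul_of_partialSums_nonneg (h := v - u) (hd.antitoneOn _)
    (fun i _ => hm (Set.mem_range_self i)) (fun i _ => by simpa [sum_sub_distrib] using hle i)
  simpa [mul_sub, sum_sub_distrib, heq] using this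

end PartialSums

theorem Fin.exists_perm_antitone_comp {n : ℕ} {α : Type*} [LinearOrder α] (f : Fin n → α) :
    ∃ σ : Equiv.Perm (Fin n), Antitone (f ∘ σ) :=
  ⟨Tuple.sort (OrderDual.toDual ∘ f), monotone_toDual_comp_iff.mp (Tuple.monotone_sort _)⟩

theorem isMajorizedBy_comp_perm {n : ℕ} (x : Fin n → ℝ) (σ : Equiv.Perm (Fin n)) :
    IsMajorizedBy (x ∘ σ) x :=
  ⟨fun S => ⟨S.map σ.toEmbedding, card_map _, (sum_map S σ.toEmbedding x).ge⟩,
    Equiv.sum_comp σ x⟩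

theorem convex_setOf_isMajorizedBy {n : ℕ} (x : Fin n → ℝ) :
    Convex ℝ {y | IsMajorizedBy y x} := by
  intro y₁ hy₁ y₂ hy₂ a b ha hb hab
  refine ⟨fun S => ?_, ?_⟩
  · obtain ⟨T₁, hT₁, h₁⟩ := hy₁.1 S
    obtain ⟨T₂, hT₂, h₂⟩ := hy₂.1 S
    set M := max (∑ i ∈ T₁, x i) (∑ i ∈ T₂, x i)
    have hcombo : ∑ i ∈ S, (a • y₁ + b • y₂) i ≤ M :=
      calc ∑ i ∈ S, (a • y₁ + b • y₂) i = a • ∑ i ∈ S, y₁ i + b • ∑ i ∈ S, y₂ i := by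
            simp only [Pi.add_apply, Pi.smul_apply, sum_add_distrib, smul_sum]
        _ ≤ a • M + b • M := by
            gcongr
            exacts [h₁.trans (le_max_left _ _), h₂.trans (le_max_right _ _)]
        _ = M := Convex.combo_self hab M
    rcases max_choice (∑ i ∈ T₁, x i) (∑ i ∈ T₂, x i) with hM | hM
    · exact ⟨T₁, hT₁, hcombo.trans_eq hM⟩
    · exact ⟨T₂, hT₂, hcombo.trans_eq hM⟩
  · simp only [Pi.add_apply, Pi.smul_apply, sum_add_distrib, ← smul_sum, hy₁.2, hy₂.2,
      Convex.combo_self hab]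

theorem IsMajorizedBy.exists_perm_sum_mul_le {n : ℕ} {x y : Fin n → ℝ} (h : IsMajorizedBy y x)
    (c : Fin n → ℝ) :
    ∃ σ : Equiv.Perm (Fin n), ∑ i, c i * y i ≤ ∑ i, c i * x (σ i) := by
  obtain ⟨τ, hτ⟩ := Fin.exists_perm_antitone_comp c
  obtain ⟨π, hπ⟩ := Fin.exists_perm_antitone_comp x
  have hprefix (i : Fin n) : ∑ j with j ≤ i, y (τ j) ≤ ∑ j with j ≤ i, x (π j) := by
    obtain ⟨T, hT, hyT⟩ := h.1 (({j | j ≤ i} : Finset (Fin n)).map τ.toEmbedding)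
    calc ∑ j with j ≤ i, y (τ j) = ∑ j ∈ ({j | j ≤ i} : Finset _).map τ.toEmbedding, y j := by
          rw [sum_map]; rfl
      _ ≤ ∑ j ∈ T, x j := hyT
      _ = ∑ j ∈ T.map π.symm.toEmbedding, x (π j) := by simp [sum_map]
      _ ≤ ∑ j with j ≤ i, x (π j) :=
          hπ.sum_le_sum_of_isLowerSet (fun _ _ hba ha => by simp_all [hba.trans]) (by simp [hT])
  refine ⟨τ.symm.trans π, ?_⟩
  calc ∑ i, c i * y i = ∑ i, c (τ i) * y (τ i) := (Equiv.sum_comp τ fun i => c i * y i).symm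
    _ ≤ ∑ i, c (τ i) * x (π i) := sum_mul_le_sum_mul_of_partialSums_le hτ hprefix (by
          rw [Equiv.sum_comp τ y, Equiv.sum_comp π x, h.2])
    _ = ∑ i, c i * x ((τ.symm.trans π) i) := by
          rw [← Equiv.sum_comp τ fun i => c i * x ((τ.symm.trans π) i)]; simp

/-- **Rado's theorem**: the set of vectors majorized by `x` is the convex hull of
the orbit of `x` under the symmetric group. -/
theorem rado_majorization_convexHull {n : ℕ} (x : Fin n → ℝ) :
    {y : Fin n → ℝ | IsMajorizedBy y x} =
      convexHull ℝ {z : Fin n → ℝ | ∃ σ : Equiv.Perm (Fin n), z = x ∘ σ} := by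
  set orbit := {z : Fin n → ℝ | ∃ σ : Equiv.Perm (Fin n), z = x ∘ σ}
  have horbit : orbit.Finite := (Set.finite_range fun σ : Equiv.Perm (Fin n) => x ∘ σ).subset
    fun _ ⟨σ, hσ⟩ => ⟨σ, hσ.symm⟩
  refine subset_antisymm (fun y hy => ?_) (convexHull_min ?_ (convex_setOf_isMajorizedBy x))
  · rw [← iInter_halfSpaces_eq (convex_convexHull ℝ orbit)
      (horbit.isCompact_convexHull (𝕜 := ℝ)).isClosed]
    refine Set.mem_iInter.mpr fun l => ?_
    have hl (z : Fin n → ℝ) : l z = ∑ i, l (Pi.single i 1) * z i := by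
      conv_lhs => rw [pi_eq_sum_univ' z]
      simp [mul_comm]
    obtain ⟨σ, hσ⟩ := hy.exists_perm_sum_mul_le fun i => l (Pi.single i 1)
    exact ⟨x ∘ σ, subset_convexHull ℝ orbit ⟨σ, rfl⟩, by rw [hl y, hl (x ∘ σ)]; exact hσ⟩
  · rintro _ ⟨σ, rfl⟩
    exact isMajorizedBy_comp_perm x σ
end

section
/- (Density of dyadic permutations in Smeas(I) for the strong operator topology) For every Lebesgue-measure-preserving transformation S : [0,1] → [0,1] (not necessarily invertible), every f ∈ L²([0,1]), and every ε > 0, there exist m ∈ ℕ and a permutation σ of {0,…,m} such that ‖f ∘ σ̂ − f ∘ S‖_{L²([0,1])} < ε, where σ̂ is the dyadic permutation of rank m associated to σ. -/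
open MeasureTheory

/-- The index `k` with `t ∈ I^m_k = [k/(m+1), (k+1)/(m+1))` (for `t ∈ [0,1)`). -/
noncomputable def dyadicIdx (m : ℕ) (t : ℝ) : Fin (m + 1) :=
  ⟨min ⌊t * (m + 1)⌋₊ m, Nat.lt_succ_of_le (min_le_right _ _)⟩

/-- The dyadic permutation `σ̂` of rank `m` associated to a permutation `σ` of
`{0, …, m}`: it sends `I^m_k` to `I^m_{σ(k)}` by translation. -/
noncomputable def dyadicPerm (m : ℕ) (σ : Equiv.Perm (Fin (m + 1))) (t : ℝ) : ℝ :=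
  t + ((σ (dyadicIdx m t) : ℕ) : ℝ) / (m + 1) - ((dyadicIdx m t : ℕ) : ℝ) / (m + 1)

/-!
Approximate `f` in `L²` by a step function `c ∘ dyadicIdx n`. As `S` and `σ̂` preserve measure,
it then suffices to make `dyadicIdx n ∘ σ̂` agree with `τ = dyadicIdx n ∘ S` outside a small set.
Approximate `τ` in measure by `ψ ∘ dyadicIdx m` with `n + 1 ∣ m + 1`, so that every `I^n_k` is a
block of rank-`m` intervals, and let `σ` send as many intervals of `ψ⁻¹(k)` as possible into the
block of `I^n_k`. Since `S` preserves measure, each `τ⁻¹(k)` has measure `1/(n+1)`, the size of a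
block, so only few intervals are left over.
-/

open Set Filter
open scoped ENNReal Finset

local notation "μ₀" => volume.restrict (Icc (0 : ℝ) 1)

def dyadicInterval (m : ℕ) (k : Fin (m + 1)) : Set ℝ :=
  Ico ((k : ℝ) / (m + 1)) ((k + 1 : ℝ) / (m + 1))

lemma measurable_dyadicIdx (m : ℕ) : Measurable (dyadicIdx m) :=
  measurable_to_countable' fun k => by
    have : dyadicIdx m ⁻¹' {k} = {t : ℝ | min ⌊t * (m + 1)⌋₊ m = k} := by
      ext t; simp [dyadicIdx, Fin.ext_iff]
    rw [this]
    exact ((measurable_id.mul_const _).nat_floor.min measurable_const) (measurableSet_singleton _)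

section DyadicInterval

variable {m : ℕ} {t : ℝ}

lemma dyadicIdx_val_of_mem_Ico (ht : t ∈ Ico (0 : ℝ) 1) :
    (dyadicIdx m t : ℕ) = ⌊t * (m + 1)⌋₊ := by
  have hlt : ⌊t * (m + 1)⌋₊ < m + 1 :=
    (Nat.floor_lt (by have := ht.1; positivity)).2 (by push_cast; nlinarith [ht.2])
  exact min_eq_left (Nat.lt_succ_iff.1 hlt)

lemma dyadicIdx_eq_iff (ht : t ∈ Ico (0 : ℝ) 1) {k : Fin (m + 1)} :
    dyadicIdx m t = k ↔ t ∈ dyadicInterval m k := by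
  have hm : (0 : ℝ) < m + 1 := by positivity
  rw [Fin.ext_iff, dyadicIdx_val_of_mem_Ico ht, Nat.floor_eq_iff (by have := ht.1; positivity),
    dyadicInterval, mem_Ico, div_le_iff₀ hm, lt_div_iff₀ hm]

lemma dyadicInterval_subset_Ico (k : Fin (m + 1)) : dyadicInterval m k ⊆ Ico 0 1 := by
  have hk : (k + 1 : ℝ) ≤ m + 1 := by exact_mod_cast k.2
  exact Ico_subset_Ico (by positivity) ((div_le_one (by positivity)).2 hk)

lemma dyadicIdx_eq_of_mem {k : Fin (m + 1)} (ht : t ∈ dyadicInterval m k) : dyadicIdx m t = k :=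
  (dyadicIdx_eq_iff (dyadicInterval_subset_Ico k ht)).2 ht

lemma mem_dyadicInterval_dyadicIdx (ht : t ∈ Ico (0 : ℝ) 1) :
    t ∈ dyadicInterval m (dyadicIdx m t) :=
  (dyadicIdx_eq_iff ht).1 rfl

lemma iUnion_dyadicInterval : ⋃ k, dyadicInterval m k = Ico 0 1 :=
  (iUnion_subset dyadicInterval_subset_Ico).antisymm
    fun _ ht => mem_iUnion.2 ⟨_, mem_dyadicInterval_dyadicIdx ht⟩

lemma pairwise_disjoint_dyadicInterval : Pairwise (Function.onFun Disjoint (dyadicInterval m)) :=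
  fun _ _ hkl => disjoint_left.2 fun _ htk htl =>
    hkl ((dyadicIdx_eq_of_mem htk).symm.trans (dyadicIdx_eq_of_mem htl))

lemma volume_dyadicInterval (k : Fin (m + 1)) :
    volume (dyadicInterval m k) = ((m : ℝ≥0∞) + 1)⁻¹ := by
  rw [dyadicInterval, Real.volume_Ico, ← sub_div, add_sub_cancel_left, one_div,
    ENNReal.ofReal_inv_of_pos (by positivity)]
  norm_cast

end DyadicInterval

lemma restrict_Icc_eq_sum_restrict_dyadicInterval (m : ℕ) :
    μ₀ = Measure.sum fun k => volume.restrict (dyadicInterval m k) := by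
  rw [← Measure.restrict_iUnion pairwise_disjoint_dyadicInterval (fun _ => measurableSet_Ico),
    iUnion_dyadicInterval, Measure.restrict_congr_set Ico_ae_eq_Icc]

lemma ae_restrict_Icc_mem_Ico : ∀ᵐ t ∂μ₀, t ∈ Ico (0 : ℝ) 1 := by
  rw [← Measure.restrict_congr_set Ico_ae_eq_Icc]
  exact ae_restrict_mem measurableSet_Ico

lemma restrict_Icc_preimage_dyadicIdx (m : ℕ) (s : Finset (Fin (m + 1))) :
    μ₀ (dyadicIdx m ⁻¹' s) = #s / (m + 1) := by
  have hs : MeasurableSet (dyadicIdx m ⁻¹' s) := measurable_dyadicIdx m (by measurability)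
  rw [restrict_Icc_eq_sum_restrict_dyadicInterval m, Measure.sum_apply _ hs, tsum_fintype]
  have hpiece (k : Fin (m + 1)) : volume.restrict (dyadicInterval m k) (dyadicIdx m ⁻¹' s) =
      if k ∈ s then ((m : ℝ≥0∞) + 1)⁻¹ else 0 := by
    rw [Measure.restrict_apply hs]
    split_ifs with hk
    · rw [← volume_dyadicInterval k]
      congr 1
      exact inter_eq_right.2 fun t ht => by simpa [dyadicIdx_eq_of_mem ht] using hk
    · convert measure_empty (μ := volume)
      exact eq_empty_of_forall_notMem fun t ht =>
        hk (by simpa [dyadicIdx_eq_of_mem ht.2] using ht.1)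
  simp_rw [hpiece, Finset.sum_ite_mem, Finset.univ_inter, Finset.sum_const, nsmul_eq_mul,
    div_eq_mul_inv]

lemma exists_dyadicIdx_eq_comp {m n : ℕ} (h : n + 1 ∣ m + 1) :
    ∃ π : Fin (m + 1) → Fin (n + 1), ∀ t, dyadicIdx n t = π (dyadicIdx m t) := by
  obtain ⟨N, hN⟩ := h
  have hN0 : 0 < N := Nat.pos_of_ne_zero (by rintro rfl; simp at hN)
  refine ⟨fun j => ⟨j / N, Nat.div_lt_of_lt_mul (by rw [mul_comm, ← hN]; exact j.2)⟩, fun t => ?_⟩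
  have hmN : m / N = n := Nat.div_eq_of_lt_le (by nlinarith) (by nlinarith)
  have hscale : t * (n + 1) = t * (m + 1) / N := by
    have hmr : ((m : ℝ) + 1) = ((n : ℝ) + 1) * N := by exact_mod_cast hN
    rw [hmr]; field_simp
  simp only [dyadicIdx, Fin.ext_iff, hscale, Nat.floor_div_natCast]
  rw [← hmN]
  exact (Monotone.map_min fun a b hab => Nat.div_le_div_right hab).symm

lemma measurable_dyadicPerm (m : ℕ) (σ : Equiv.Perm (Fin (m + 1))) :
    Measurable (dyadicPerm m σ) := by
  have hidx := measurable_dyadicIdx m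
  exact (measurable_id.add ((measurable_of_countable fun k => ((σ k : ℕ) : ℝ) / (m + 1)).comp
    hidx)).sub ((measurable_of_countable fun k : Fin (m + 1) => ((k : ℕ) : ℝ) / (m + 1)).comp hidx)

section DyadicPerm

variable {m : ℕ} {σ : Equiv.Perm (Fin (m + 1))} {t : ℝ}

lemma add_mem_dyadicInterval_iff (k l : Fin (m + 1)) :
    t + ((l : ℝ) - k) / (m + 1) ∈ dyadicInterval m l ↔ t ∈ dyadicInterval m k := by
  simp only [dyadicInterval, mem_Ico, sub_div, add_div]
  constructor <;> rintro ⟨h₁, h₂⟩ <;> constructor <;> linarith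

lemma dyadicPerm_eq_add {k : Fin (m + 1)} (ht : t ∈ dyadicInterval m k) :
    dyadicPerm m σ t = t + ((σ k : ℝ) - k) / (m + 1) := by
  rw [dyadicPerm, dyadicIdx_eq_of_mem ht]; ring

lemma dyadicIdx_dyadicPerm (ht : t ∈ Ico (0 : ℝ) 1) :
    dyadicIdx m (dyadicPerm m σ t) = σ (dyadicIdx m t) := by
  have hk := mem_dyadicInterval_dyadicIdx (m := m) ht
  exact dyadicIdx_eq_of_mem <| by
    rwa [dyadicPerm_eq_add hk, add_mem_dyadicInterval_iff]

lemma map_dyadicPerm_restrict_dyadicInterval (k : Fin (m + 1)) :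
    (volume.restrict (dyadicInterval m k)).map (dyadicPerm m σ) =
      volume.restrict (dyadicInterval m (σ k)) := by
  set d : ℝ := ((σ k : ℝ) - k) / (m + 1)
  have hpre : (· + d) ⁻¹' dyadicInterval m (σ k) = dyadicInterval m k :=
    ext fun _ => add_mem_dyadicInterval_iff k (σ k)
  have hae : dyadicPerm m σ =ᵐ[volume.restrict (dyadicInterval m k)] (· + d) :=
    ae_restrict_of_forall_mem measurableSet_Ico fun _ => dyadicPerm_eq_add
  rw [Measure.map_congr hae, ← hpre]
  exact ((measurePreserving_add_right volume d).restrict_preimage_emb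
    (measurableEmbedding_addRight d) _).map_eq

end DyadicPerm

theorem measurePreserving_dyadicPerm (m : ℕ) (σ : Equiv.Perm (Fin (m + 1))) :
    MeasurePreserving (dyadicPerm m σ) μ₀ μ₀ := by
  refine ⟨measurable_dyadicPerm m σ, ?_⟩
  rw [restrict_Icc_eq_sum_restrict_dyadicInterval m,
    Measure.map_sum (measurable_dyadicPerm m σ).aemeasurable]
  simp_rw [map_dyadicPerm_restrict_dyadicInterval]
  exact Measure.sum_comp_equiv σ fun k => volume.restrict (dyadicInterval m k)

lemma exists_sigma_embedding_fiber {α β : Type*} [Fintype α] [DecidableEq β] (f : α → β)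
    (s : β → ℕ) (hs : ∀ b, s b ≤ #{a | f a = b}) :
    ∃ E : (Σ b, Fin (s b)) ↪ α, ∀ x, f (E x) = x.1 := by
  have he (b : β) : Nonempty (Fin (s b) ↪ {a // f a = b}) :=
    Function.Embedding.nonempty_of_card_le (by simpa [Fintype.card_subtype] using hs b)
  exact ⟨(Function.Embedding.sigmaMap (Function.Embedding.refl β) fun b => (he b).some).trans
    (Equiv.sigmaFiberEquiv f).toEmbedding, fun x => ((he x.1).some x.2).2⟩

theorem exists_perm_card_comp_ne_le {α β : Type*} [Fintype α] [DecidableEq α] [Fintype β]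
    [DecidableEq β] (ψ π : α → β) :
    ∃ σ : Equiv.Perm α, #{a | π (σ a) ≠ ψ a} ≤ ∑ b, (#{a | ψ a = b} - #{a | π a = b}) := by
  -- Over each `b`, `σ` sends `min #ψ⁻¹(b) #π⁻¹(b)` points of `ψ⁻¹(b)` into `π⁻¹(b)`.
  set s : β → ℕ := fun b => min #{a | ψ a = b} #{a | π a = b}
  obtain ⟨E₁, hE₁⟩ := exists_sigma_embedding_fiber ψ s fun _ => min_le_left _ _
  obtain ⟨E₂, hE₂⟩ := exists_sigma_embedding_fiber π s fun _ => min_le_right _ _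
  let σ : Equiv.Perm α := ((Equiv.ofInjective E₁ E₁.injective).symm.trans
    (Equiv.ofInjective E₂ E₂.injective)).extendSubtype
  have hσ (x : Σ b, Fin (s b)) : σ (E₁ x) = E₂ x := by
    rw [Equiv.extendSubtype_apply_of_mem _ _ (mem_range_self x)]
    simp [Equiv.ofInjective_symm_apply]
  refine ⟨σ, ?_⟩
  have hbad : ({a | π (σ a) ≠ ψ a} : Finset α) ⊆ Finset.univ \ Finset.univ.map E₁ := by
    intro a ha
    simp only [Finset.mem_filter, Finset.mem_univ, true_and] at ha
    simp only [Finset.mem_sdiff, Finset.mem_univ, Finset.mem_map, true_and, not_exists]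
    rintro x rfl
    exact ha (by rw [hσ, hE₁, hE₂])
  calc #{a | π (σ a) ≠ ψ a} ≤ Fintype.card α - ∑ b, s b := by
        simpa [Finset.card_univ_sdiff, Fintype.card_sigma] using Finset.card_le_card hbad
    _ = ∑ b, (#{a | ψ a = b} - s b) := by
        rw [Finset.sum_tsub_distrib _ fun _ _ => min_le_left _ _, ← Finset.card_univ,
          Finset.card_eq_sum_card_fiberwise (f := ψ) (t := Finset.univ)
            fun _ _ => Finset.mem_coe.2 (Finset.mem_univ _)]
    _ = ∑ b, (#{a | ψ a = b} - #{a | π a = b}) := by simp only [s, tsub_min]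

lemma abs_sub_dyadicIdx_lt {m : ℕ} {t : ℝ} (ht : t ∈ Ico (0 : ℝ) 1) :
    |t - (dyadicIdx m t : ℝ) / (m + 1)| < 1 / (m + 1) := by
  have h := mem_dyadicInterval_dyadicIdx (m := m) ht
  simp only [dyadicInterval, mem_Ico, add_div] at h
  rw [abs_lt]; constructor <;> linarith [h.1, h.2, show (0 : ℝ) < 1 / (m + 1) by positivity]

theorem MeasureTheory.MemLp.eventually_exists_eLpNorm_sub_comp_dyadicIdx_lt {E : Type*}
    [NormedAddCommGroup E] [NormedSpace ℝ E] {p : ℝ≥0∞} (hp1 : 1 ≤ p) (hp : p ≠ ∞)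
    {f : ℝ → E} (hf : MemLp f p μ₀) {η : ℝ} (hη : 0 < η) :
    ∀ᶠ n in atTop, ∃ c : Fin (n + 1) → E,
      eLpNorm (fun t => f t - c (dyadicIdx n t)) p μ₀ < ENNReal.ofReal η := by
  obtain ⟨g, hg_supp, hfg, hg_cont, -⟩ := hf.exists_hasCompactSupport_eLpNorm_sub_le hp
    (ε := ENNReal.ofReal (η / 3)) (by positivity)
  obtain ⟨δ, hδ, hgδ⟩ := Metric.uniformContinuous_iff.1
    (hg_supp.uniformContinuous_of_continuous hg_cont) (η / 3) (by positivity)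
  filter_upwards [tendsto_one_div_add_atTop_nhds_zero_nat.eventually (gt_mem_nhds hδ)] with n hn
  refine ⟨fun k => g ((k : ℝ) / (n + 1)), ?_⟩
  have hstep : eLpNorm (fun t => g t - g ((dyadicIdx n t : ℝ) / (n + 1))) p μ₀ ≤
      ENNReal.ofReal (η / 3) := by
    refine (eLpNorm_le_of_ae_bound (C := η / 3) ?_).trans_eq (by simp)
    filter_upwards [ae_restrict_Icc_mem_Ico] with t ht
    rw [← dist_eq_norm]
    exact (hgδ (by rw [Real.dist_eq]; exact (abs_sub_dyadicIdx_lt ht).trans hn)).le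
  have hsplit : (fun t => f t - g ((dyadicIdx n t : ℝ) / (n + 1))) =
      (f - g) + fun t => g t - g ((dyadicIdx n t : ℝ) / (n + 1)) := by
    ext t; simp
  have hc_meas : AEStronglyMeasurable (fun t => g ((dyadicIdx n t : ℝ) / (n + 1))) μ₀ :=
    ((StronglyMeasurable.of_discrete (f := fun k : Fin (n + 1) => g ((k : ℝ) / (n + 1))))
      |>.comp_measurable (measurable_dyadicIdx n)).aestronglyMeasurable
  rw [hsplit]
  calc eLpNorm _ p μ₀ ≤ ENNReal.ofReal (η / 3) + ENNReal.ofReal (η / 3) :=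
        (eLpNorm_add_le (hf.1.sub hg_cont.aestronglyMeasurable)
          (hg_cont.aestronglyMeasurable.sub hc_meas) hp1).trans (add_le_add hfg hstep)
    _ < ENNReal.ofReal η := by
        rw [← ENNReal.ofReal_add (by positivity) (by positivity)]
        exact ENNReal.ofReal_lt_ofReal_iff_of_nonneg (by positivity) |>.2 (by linarith)

lemma exists_round_fin (n : ℕ) :
    ∃ ρ : ℝ → Fin (n + 1), ∀ (k : Fin (n + 1)) (x : ℝ), |x - k| < 1 / 2 → ρ x = k := by
  refine ⟨fun x => ⟨min ⌊x + 1 / 2⌋₊ n, Nat.lt_succ_of_le (min_le_right _ _)⟩, fun k x hx => ?_⟩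
  have hk : ⌊x + 1 / 2⌋₊ = k := by
    obtain ⟨h₁, h₂⟩ := abs_lt.1 hx
    rw [Nat.floor_eq_iff (by linarith [(k.val.cast_nonneg : (0 : ℝ) ≤ k)])]
    constructor <;> linarith
  ext
  change min _ n = _
  rw [hk]
  exact min_eq_left (Nat.lt_succ_iff.1 k.2)

theorem eventually_exists_restrict_Icc_comp_dyadicIdx_ne_lt {n : ℕ} {τ : ℝ → Fin (n + 1)}
    (hτ : Measurable τ) {η : ℝ} (hη : 0 < η) :
    ∀ᶠ m in atTop, ∃ ψ : Fin (m + 1) → Fin (n + 1),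
      μ₀ {t | ψ (dyadicIdx m t) ≠ τ t} < ENNReal.ofReal η := by
  -- Approximate `τ`, read as a real function, in `L¹` and round; Markov bounds the mismatch.
  set h : ℝ → ℝ := fun t => τ t
  have hh_meas : Measurable h :=
    (measurable_of_countable fun k : Fin (n + 1) => ((k : ℕ) : ℝ)).comp hτ
  have hh : MemLp h 1 μ₀ := MemLp.of_bound hh_meas.aestronglyMeasurable n <|
    ae_of_all _ fun t => by simpa [h] using Nat.lt_succ_iff.1 (τ t).2
  obtain ⟨ρ, hρ⟩ := exists_round_fin n
  filter_upwards [hh.eventually_exists_eLpNorm_sub_comp_dyadicIdx_lt le_rfl ENNReal.one_ne_top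
    (half_pos hη)] with m ⟨c, hc⟩
  refine ⟨ρ ∘ c, ?_⟩
  have hF : AEStronglyMeasurable (fun t => h t - c (dyadicIdx m t)) μ₀ :=
    (hh_meas.sub ((measurable_of_countable c).comp (measurable_dyadicIdx m))).aestronglyMeasurable
  have hsub : {t | (ρ ∘ c) (dyadicIdx m t) ≠ τ t} ⊆
      {t | ENNReal.ofReal (1 / 2) ≤ ‖h t - c (dyadicIdx m t)‖ₑ} := by
    intro t ht
    rw [mem_ofPred, Real.enorm_eq_ofReal_abs]
    refine ENNReal.ofReal_le_ofReal (not_lt.1 fun hlt => ht (hρ _ _ ?_))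
    rwa [abs_sub_comm]
  calc μ₀ _ ≤ μ₀ {t | ENNReal.ofReal (1 / 2) ≤ ‖h t - c (dyadicIdx m t)‖ₑ} := measure_mono hsub
    _ ≤ 2 * eLpNorm (fun t => h t - c (dyadicIdx m t)) 1 μ₀ := by
        simpa [ENNReal.ofReal_inv_of_pos] using
          meas_ge_le_mul_pow_eLpNorm_enorm μ₀ one_ne_zero ENNReal.one_ne_top hF
            (ε := ENNReal.ofReal (1 / 2)) (by simp) (by simp)
    _ < 2 * ENNReal.ofReal (η / 2) := ENNReal.mul_lt_mul_right (by simp) (by simp) hc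
    _ = ENNReal.ofReal η := by
        rw [← ENNReal.ofReal_ofNat 2, ← ENNReal.ofReal_mul (by norm_num)]; ring_nf

theorem exists_dyadicPerm_restrict_Icc_dyadicIdx_ne_le {n m : ℕ} (hnm : n + 1 ∣ m + 1)
    {τ : ℝ → Fin (n + 1)} (hτ : ∀ k, μ₀ (τ ⁻¹' {k}) = μ₀ (dyadicIdx n ⁻¹' {k}))
    (ψ : Fin (m + 1) → Fin (n + 1)) :
    ∃ σ : Equiv.Perm (Fin (m + 1)), μ₀ {t | dyadicIdx n (dyadicPerm m σ t) ≠ τ t} ≤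
      (n + 2) * μ₀ {t | ψ (dyadicIdx m t) ≠ τ t} := by
  obtain ⟨π, hπ⟩ := exists_dyadicIdx_eq_comp hnm
  obtain ⟨σ, hσ⟩ := exists_perm_card_comp_ne_le ψ π
  refine ⟨σ, ?_⟩
  set η := μ₀ {t | ψ (dyadicIdx m t) ≠ τ t}
  -- `τ` and `π ∘ dyadicIdx m` are equidistributed, so `#ψ⁻¹(k)` exceeds `#π⁻¹(k)` by at most
  -- `(m + 1) η`; only that many rank-`m` intervals are sent outside their `π`-block.
  have hfibre (k : Fin (n + 1)) :
      (#{j | ψ j = k} : ℝ≥0∞) / (m + 1) - #{j | π j = k} / (m + 1) ≤ η := by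
    rw [← restrict_Icc_preimage_dyadicIdx, ← restrict_Icc_preimage_dyadicIdx, tsub_le_iff_left]
    calc μ₀ (dyadicIdx m ⁻¹' ↑({j | ψ j = k} : Finset _))
        ≤ μ₀ (τ ⁻¹' {k} ∪ {t | ψ (dyadicIdx m t) ≠ τ t}) :=
          measure_mono fun t ht => by
            simp only [Finset.coe_filter, Finset.mem_univ, true_and, mem_preimage, mem_ofPred] at ht
            by_cases h : τ t = k
            · exact Or.inl h
            · exact Or.inr (ht.trans_ne (Ne.symm h))
      _ ≤ μ₀ (τ ⁻¹' {k}) + η := measure_union_le _ _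
      _ = μ₀ (dyadicIdx m ⁻¹' ↑({j | π j = k} : Finset _)) + η := by
          rw [hτ]; congr 2; ext t; simp [hπ]
  have hbad : μ₀ (dyadicIdx m ⁻¹' ↑({j | π (σ j) ≠ ψ j} : Finset _)) ≤ (n + 1) * η :=
    calc _ = (#{j | π (σ j) ≠ ψ j} : ℝ≥0∞) / (m + 1) := restrict_Icc_preimage_dyadicIdx _ _
      _ ≤ ((∑ k, (#{j | ψ j = k} - #{j | π j = k}) : ℕ) : ℝ≥0∞) / (m + 1) := by
          gcongr
      _ = ∑ k, ((#{j | ψ j = k} : ℝ≥0∞) / (m + 1) - #{j | π j = k} / (m + 1)) := by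
          simp only [Nat.cast_sum, ENNReal.natCast_sub, div_eq_mul_inv, Finset.sum_mul]
          exact Finset.sum_congr rfl fun k _ => ENNReal.sub_mul fun _ _ => by simp
      _ ≤ ∑ _k : Fin (n + 1), η := Finset.sum_le_sum fun k _ => hfibre k
      _ = (n + 1) * η := by simp
  calc μ₀ {t | dyadicIdx n (dyadicPerm m σ t) ≠ τ t}
      ≤ μ₀ ({t | ψ (dyadicIdx m t) ≠ τ t} ∪ dyadicIdx m ⁻¹' ↑({j | π (σ j) ≠ ψ j} : Finset _)) := by
        refine measure_mono_ae ?_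
        filter_upwards [ae_restrict_Icc_mem_Ico] with t ht hne
        change dyadicIdx n (dyadicPerm m σ t) ≠ τ t at hne
        rw [hπ, dyadicIdx_dyadicPerm ht] at hne
        change t ∈ ({t | ψ (dyadicIdx m t) ≠ τ t} : Set ℝ) ∪ _
        simp only [mem_union, mem_ofPred, mem_preimage, Finset.coe_filter, Finset.mem_univ,
          true_and]
        by_contra! h
        exact hne (h.2.trans h.1)
    _ ≤ η + (n + 1) * η := (measure_union_le _ _).trans (add_le_add le_rfl hbad)
    _ = (n + 2) * η := by ring

theorem exists_dyadicPerm_restrict_Icc_dyadicIdx_ne_lt {S : ℝ → ℝ} (hS : MeasurePreserving S μ₀ μ₀)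
    (n : ℕ) {δ : ℝ} (hδ : 0 < δ) :
    ∃ (m : ℕ) (σ : Equiv.Perm (Fin (m + 1))),
      μ₀ {t | dyadicIdx n (dyadicPerm m σ t) ≠ dyadicIdx n (S t)} < ENNReal.ofReal δ := by
  have hτ : Measurable fun t => dyadicIdx n (S t) := (measurable_dyadicIdx n).comp hS.measurable
  obtain ⟨M, hM⟩ := (eventually_exists_restrict_Icc_comp_dyadicIdx_ne_lt hτ
    (div_pos hδ (by positivity : (0 : ℝ) < n + 2))).exists_forall_of_atTop
  have hpos : 0 < (n + 1) * (M + 1) := by positivity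
  obtain ⟨ψ, hψ⟩ := hM ((n + 1) * (M + 1) - 1) (Nat.le_sub_one_of_lt (by nlinarith))
  have hdvd : n + 1 ∣ (n + 1) * (M + 1) - 1 + 1 := by
    rw [Nat.sub_add_cancel hpos]; exact dvd_mul_right _ _
  obtain ⟨σ, hσ⟩ := exists_dyadicPerm_restrict_Icc_dyadicIdx_ne_le hdvd
    (fun k => hS.measure_preimage
      (measurable_dyadicIdx n (measurableSet_singleton k)).nullMeasurableSet) ψ
  refine ⟨_, σ, hσ.trans_lt ?_⟩
  have hn2 : ((n : ℝ≥0∞) + 2) = ENNReal.ofReal ((n : ℝ) + 2) := by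
    rw [ENNReal.ofReal_add (by positivity) (by norm_num)]; simp
  calc ((n : ℝ≥0∞) + 2) * _ < (n + 2) * ENNReal.ofReal (δ / (n + 2)) :=
        ENNReal.mul_lt_mul_right (by positivity) (by simp) hψ
    _ = ENNReal.ofReal δ := by
        rw [hn2, ← ENNReal.ofReal_mul (by positivity), mul_div_cancel₀ _ (by positivity)]

lemma eLpNorm_comp_sub_comp_le {α ι E : Type*} [MeasurableSpace α] [Fintype ι]
    [NormedAddCommGroup E] {μ : Measure α} {p : ℝ≥0∞} (hp0 : p ≠ 0) (hp : p ≠ ∞) (c : ι → E)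
    {u v : α → ι} (hZ : MeasurableSet {t | u t ≠ v t}) :
    eLpNorm (fun t => c (u t) - c (v t)) p μ ≤
      ENNReal.ofReal (2 * ‖c‖) * μ {t | u t ≠ v t} ^ (1 / p.toReal) := by
  have hbound (t : α) :
      ‖c (u t) - c (v t)‖ ≤ ‖{t | u t ≠ v t}.indicator (fun _ => 2 * ‖c‖) t‖ := by
    by_cases h : u t = v t
    · simp [h]
    · rw [indicator_of_mem h, Real.norm_of_nonneg (by positivity), two_mul]
      exact (norm_sub_le _ _).trans (add_le_add (norm_le_pi_norm c _) (norm_le_pi_norm c _))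
  refine (eLpNorm_mono hbound).trans_eq ?_
  rw [eLpNorm_indicator_const hZ hp0 hp, Real.enorm_eq_ofReal (by positivity)]

theorem exists_dyadicPerm_eLpNorm_comp_dyadicIdx_sub_lt {S : ℝ → ℝ}
    (hS : MeasurePreserving S μ₀ μ₀) {n : ℕ} (c : Fin (n + 1) → ℝ) {ε : ℝ} (hε : 0 < ε) :
    ∃ (m : ℕ) (σ : Equiv.Perm (Fin (m + 1))),
      eLpNorm (fun t => c (dyadicIdx n (dyadicPerm m σ t)) - c (dyadicIdx n (S t))) 2 μ₀ <
        ENNReal.ofReal ε := by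
  set C := 2 * ‖c‖
  have hC : 0 ≤ C := by positivity
  obtain ⟨m, σ, hσ⟩ :=
    exists_dyadicPerm_restrict_Icc_dyadicIdx_ne_lt hS n (δ := (ε / (C + 1)) ^ 2) (by positivity)
  have hZ : MeasurableSet {t | dyadicIdx n (dyadicPerm m σ t) ≠ dyadicIdx n (S t)} :=
    (measurableSet_eq_fun ((measurable_dyadicIdx n).comp (measurable_dyadicPerm m σ))
      ((measurable_dyadicIdx n).comp hS.measurable)).compl
  refine ⟨m, σ, (eLpNorm_comp_sub_comp_le two_ne_zero ENNReal.ofNat_ne_top c hZ).trans_lt ?_⟩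
  have hsqrt : μ₀ {t | dyadicIdx n (dyadicPerm m σ t) ≠ dyadicIdx n (S t)} ^ (1 / (2 : ℝ≥0∞).toReal)
      ≤ ENNReal.ofReal (ε / (C + 1)) := by
    calc _ ≤ ENNReal.ofReal ((ε / (C + 1)) ^ 2) ^ (1 / (2 : ℝ≥0∞).toReal) :=
          ENNReal.rpow_le_rpow hσ.le (by norm_num)
      _ = ENNReal.ofReal (ε / (C + 1)) := by
          rw [ENNReal.ofReal_rpow_of_nonneg (by positivity) (by norm_num), ENNReal.toReal_ofNat,
            ← Real.sqrt_eq_rpow, Real.sqrt_sq (by positivity)]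
  calc _ ≤ ENNReal.ofReal C * ENNReal.ofReal (ε / (C + 1)) := by gcongr
    _ = ENNReal.ofReal (C * (ε / (C + 1))) := (ENNReal.ofReal_mul hC).symm
    _ < ENNReal.ofReal ε := by
        rw [ENNReal.ofReal_lt_ofReal_iff hε, mul_div_assoc', div_lt_iff₀ (by positivity)]
        nlinarith

lemma eLpNorm_sub_le_add_add {α E : Type*} [MeasurableSpace α] [NormedAddCommGroup E]
    {μ : Measure α} {p : ℝ≥0∞} (hp : 1 ≤ p) {a b c d : α → E} (ha : AEStronglyMeasurable a μ)
    (hb : AEStronglyMeasurable b μ) (hc : AEStronglyMeasurable c μ)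
    (hd : AEStronglyMeasurable d μ) :
    eLpNorm (a - d) p μ ≤ eLpNorm (a - b) p μ + eLpNorm (b - c) p μ + eLpNorm (c - d) p μ :=
  calc eLpNorm (a - d) p μ = eLpNorm ((a - b) + (b - c) + (c - d)) p μ := by
        congr 1; abel
    _ ≤ _ := (eLpNorm_add_le ((ha.sub hb).add (hb.sub hc)) (hc.sub hd) hp).trans
        (add_le_add_left (eLpNorm_add_le (ha.sub hb) (hb.sub hc) hp) _)

theorem dyadicPerm_dense_strong_operator_topology_general
    (S : ℝ → ℝ)
    (hSmp : MeasurePreserving S (volume.restrict (Set.Icc (0 : ℝ) 1))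
      (volume.restrict (Set.Icc (0 : ℝ) 1)))
    (f : ℝ → ℝ) (hf : MemLp f 2 (volume.restrict (Set.Icc (0 : ℝ) 1)))
    (ε : ℝ) (hε : 0 < ε) :
    ∃ (m : ℕ) (σ : Equiv.Perm (Fin (m + 1))),
      eLpNorm (fun t => f (dyadicPerm m σ t) - f (S t)) 2
        (volume.restrict (Set.Icc (0 : ℝ) 1)) < ENNReal.ofReal ε := by
  obtain ⟨n, c, hfc⟩ := (hf.eventually_exists_eLpNorm_sub_comp_dyadicIdx_lt one_le_two
    ENNReal.ofNat_ne_top (div_pos hε three_pos)).exists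
  obtain ⟨m, σ, hcσ⟩ :=
    exists_dyadicPerm_eLpNorm_comp_dyadicIdx_sub_lt hSmp c (div_pos hε three_pos)
  refine ⟨m, σ, ?_⟩
  set g : ℝ → ℝ := fun t => c (dyadicIdx n t)
  have hg : AEStronglyMeasurable g μ₀ :=
    ((measurable_of_countable c).comp (measurable_dyadicIdx n)).aestronglyMeasurable
  have hσ := measurePreserving_dyadicPerm m σ
  have h₁ : eLpNorm (f ∘ dyadicPerm m σ - g ∘ dyadicPerm m σ) 2 μ₀ < ENNReal.ofReal (ε / 3) :=
    (eLpNorm_comp_measurePreserving (hf.1.sub hg) hσ).trans_lt hfc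
  have h₃ : eLpNorm (g ∘ S - f ∘ S) 2 μ₀ < ENNReal.ofReal (ε / 3) := by
    rw [eLpNorm_sub_comm]; exact (eLpNorm_comp_measurePreserving (hf.1.sub hg) hSmp).trans_lt hfc
  calc eLpNorm (f ∘ dyadicPerm m σ - f ∘ S) 2 μ₀
      ≤ eLpNorm (f ∘ dyadicPerm m σ - g ∘ dyadicPerm m σ) 2 μ₀ +
          eLpNorm (g ∘ dyadicPerm m σ - g ∘ S) 2 μ₀ + eLpNorm (g ∘ S - f ∘ S) 2 μ₀ :=
        eLpNorm_sub_le_add_add one_le_two (hf.1.comp_measurePreserving hσ)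
          (hg.comp_measurePreserving hσ) (hg.comp_measurePreserving hSmp)
          (hf.1.comp_measurePreserving hSmp)
    _ < ENNReal.ofReal (ε / 3) + ENNReal.ofReal (ε / 3) + ENNReal.ofReal (ε / 3) :=
        ENNReal.add_lt_add (ENNReal.add_lt_add h₁ hcσ) h₃
    _ = ENNReal.ofReal ε := by
        rw [← ENNReal.ofReal_add (by positivity) (by positivity),
          ← ENNReal.ofReal_add (by positivity) (by positivity)]
        ring_nf

/-- **Density of dyadic permutations for the strong operator topology**: for every
(not necessarily invertible) Lebesgue-measure-preserving transformation `S` of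
`[0,1]`, every `f ∈ L²([0,1])` and every `ε > 0`, there is a dyadic permutation
`σ̂` with `‖f ∘ σ̂ - f ∘ S‖₂ < ε`. -/
theorem dyadicPerm_dense_strong_operator_topology
    (S : ℝ → ℝ) (hS : Set.MapsTo S (Set.Icc (0 : ℝ) 1) (Set.Icc (0 : ℝ) 1))
    (hSmp : MeasurePreserving S (volume.restrict (Set.Icc (0 : ℝ) 1))
      (volume.restrict (Set.Icc (0 : ℝ) 1)))
    (f : ℝ → ℝ) (hf : MemLp f 2 (volume.restrict (Set.Icc (0 : ℝ) 1)))
    (ε : ℝ) (hε : 0 < ε) :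
    ∃ (m : ℕ) (σ : Equiv.Perm (Fin (m + 1))),
      eLpNorm (fun t => f (dyadicPerm m σ t) - f (S t)) 2
        (volume.restrict (Set.Icc (0 : ℝ) 1)) < ENNReal.ofReal ε :=
  dyadicPerm_dense_strong_operator_topology_general S hSmp f hf ε hε
end

section
/- (Skorokhod's representation theorem) Let (X, Σ, μ) be a finite measure space and f, f_n : X → ℝ measurable functions such that f_n converges to f in distribution, i.e. the distribution functions satisfy μ{ω : f_n(ω) < x} → μ{ω : f(ω) < x} at every x at which x ↦ μ{ω : f(ω) < x} is continuous. Then on the interval I = (0, μ(X)) with Lebesgue measure |·| there exist measurable functions g_n, g : I → ℝ such that g_n(t) → g(t) for almost every t, and μ{ω : f_n(ω) < x} = |{t ∈ I : g_n(t) < x}| and μ{ω : f(ω) < x} = |{t ∈ I : g(t) < x}| for every x ∈ ℝ and every n ≥ 1. -/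
/-!
The representing functions are the quantile functions `t ↦ inf {y | t < F y}` of the
distribution functions `F`, on `(0, μ X)`. Since `F` is left-continuous and increases from `0`
to `μ X`, `quantile F t < x ↔ t < F x` there, so `{t | quantile F t < x} = (0, F x)` has Lebesgue
measure `F x`. At every `t` where the (monotone, hence almost everywhere left-continuous)
quantile function of `f` is left-continuous, `quantile F t` is squeezed between continuity
points `x₁ < x₂` of `F` with `F x₁ < t < F x₂`; the same inequalities then hold for `Fₙ` for
large `n`, which traps `quantile Fₙ t` in `[x₁, x₂]`.
-/

open MeasureTheory Filter

section

open Set Topology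

noncomputable def distribFun {X : Type*} [MeasurableSpace X] (μ : Measure X) (h : X → ℝ)
    (x : ℝ) : ℝ :=
  (μ {ω | h ω < x}).toReal

lemma monotone_setOf_lt {α β : Type*} [Preorder β] (h : α → β) :
    Monotone fun x : β => {a | h a < x} :=
  fun _ _ hxy _ hω => hω.trans_le hxy

section distribFun

variable {X : Type*} [MeasurableSpace X] (μ : Measure X) [IsFiniteMeasure μ] (h : X → ℝ)

lemma ofReal_distribFun (x : ℝ) : ENNReal.ofReal (distribFun μ h x) = μ {ω | h ω < x} :=
  ENNReal.ofReal_toReal (measure_ne_top μ _)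

lemma monotone_distribFun : Monotone (distribFun μ h) := fun _ _ hxy =>
  ENNReal.toReal_mono (measure_ne_top μ _) (measure_mono (monotone_setOf_lt h hxy))

lemma continuousWithinAt_Iio_distribFun (x : ℝ) :
    ContinuousWithinAt (distribFun μ h) (Iio x) x := by
  have : IsCountablyGenerated (atTop : Filter (Iio x)) := by
    rw [← comap_coe_Iio_nhdsLT]; infer_instance
  have hunion : ⋃ y : Iio x, {ω | h ω < y} = {ω | h ω < x} := by
    ext ω
    simp only [mem_iUnion, mem_ofPred_eq]
    exact ⟨fun ⟨y, hy⟩ => hy.trans y.2, fun hω =>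
      let ⟨y, hy⟩ := exists_between hω; ⟨⟨y, hy.2⟩, hy.1⟩⟩
  have := tendsto_measure_iUnion_atTop (μ := μ)
    (fun y z hyz => monotone_setOf_lt h hyz : Monotone fun y : Iio x => {ω | h ω < y})
  rw [hunion] at this
  exact (tendsto_comp_coe_Iio_atTop (a := x)).1
    ((ENNReal.tendsto_toReal (measure_ne_top μ _)).comp this)

lemma tendsto_distribFun_atTop : Tendsto (distribFun μ h) atTop (𝓝 (μ univ).toReal) := by
  have hunion : ⋃ y : ℝ, {ω | h ω < y} = univ :=
    eq_univ_of_forall fun ω => mem_iUnion.2 (exists_gt (h ω))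
  have := tendsto_measure_iUnion_atTop (μ := μ) (monotone_setOf_lt h)
  rw [hunion] at this
  exact (ENNReal.tendsto_toReal (measure_ne_top μ _)).comp this

lemma tendsto_distribFun_atBot (hh : Measurable h) : Tendsto (distribFun μ h) atBot (𝓝 0) := by
  have hinter : ⋂ y : ℝ, {ω | h ω < y} = ∅ :=
    eq_empty_of_forall_notMem fun ω hω => lt_irrefl (h ω) (mem_iInter.1 hω (h ω) :)
  have := tendsto_measure_iInter_atBot (μ := μ) (s := fun y : ℝ => {ω | h ω < y})
    (fun _ => (hh measurableSet_Iio).nullMeasurableSet) (monotone_setOf_lt h)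
    ⟨0, measure_ne_top μ _⟩
  rw [hinter, measure_empty] at this
  exact (ENNReal.tendsto_toReal ENNReal.zero_ne_top).comp this

end distribFun

lemma Monotone.exists_continuousAt_mem_Ioo {F : ℝ → ℝ} (hF : Monotone F) {u v : ℝ}
    (huv : u < v) :
    ∃ x ∈ Ioo u v, ContinuousAt F x := by
  obtain ⟨x, hx, hux, hxv⟩ := (hF.countable_not_continuousAt.dense_compl ℝ).exists_between huv
  exact ⟨x, ⟨hux, hxv⟩, not_not.1 hx⟩

noncomputable def quantile (F : ℝ → ℝ) (t : ℝ) : ℝ := sInf {y | t < F y}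

section quantile

variable {F : ℝ → ℝ} {m t x : ℝ}

lemma bddBelow_setOf_lt_apply (hF : Monotone F) (hx : F x ≤ t) : BddBelow {y | t < F y} :=
  ⟨x, fun _ hy => le_of_not_gt fun hyx => (hy.trans_le ((hF hyx.le).trans hx)).false⟩

lemma quantile_le (hF : Monotone F) {y : ℝ} (hx : F x ≤ t) (hy : t < F y) : quantile F t ≤ y :=
  csInf_le (bddBelow_setOf_lt_apply hF hx) hy

lemma le_quantile (hF : Monotone F) {y : ℝ} (hx : F x ≤ t) (hy : t < F y) : x ≤ quantile F t :=
  le_csInf ⟨y, hy⟩ fun _ hz => le_of_not_gt fun hzx => (hz.trans_le ((hF hzx.le).trans hx)).false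

variable (hF : Monotone F) (hbot : Tendsto F atBot (𝓝 0)) (htop : Tendsto F atTop (𝓝 m))
include hF hbot htop

lemma quantile_lt_iff (hlc : ContinuousWithinAt F (Iio x) x) (ht : t ∈ Ioo 0 m) :
    quantile F t < x ↔ t < F x := by
  obtain ⟨a, ha⟩ := (hbot.eventually (ge_mem_nhds ht.1)).exists
  obtain ⟨b, hb⟩ := (htop.eventually (lt_mem_nhds ht.2)).exists
  constructor
  · intro hQx
    obtain ⟨y, hy, hyx⟩ := (csInf_lt_iff (bddBelow_setOf_lt_apply hF ha) ⟨b, hb⟩).1 hQx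
    exact hy.trans_le (hF hyx.le)
  · intro htx
    obtain ⟨y, hy, hyx⟩ := ((hlc.eventually (lt_mem_nhds htx)).and self_mem_nhdsWithin).exists
    exact (quantile_le hF ha hy).trans_lt hyx

lemma monotoneOn_quantile : MonotoneOn (quantile F) (Ioo 0 m) := by
  intro t₁ ht₁ t₂ ht₂ ht
  obtain ⟨a, ha⟩ := (hbot.eventually (ge_mem_nhds ht₁.1)).exists
  obtain ⟨b, hb⟩ := (htop.eventually (lt_mem_nhds ht₂.2)).exists
  exact csInf_le_csInf (bddBelow_setOf_lt_apply hF ha) ⟨b, hb⟩ fun _ hy => ht.trans_lt hy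

lemma setOf_indicator_quantile_lt (hlc : ContinuousWithinAt F (Iio x) x) :
    {t ∈ Ioo 0 m | (Ioo 0 m).indicator (quantile F) t < x} = Ioo 0 (F x) := by
  ext t
  by_cases ht : t ∈ Ioo 0 m
  · simp only [mem_sep_iff, indicator_of_mem ht, quantile_lt_iff hF hbot htop hlc ht]
    exact ⟨fun h => ⟨ht.1, h.2⟩, fun h => ⟨ht, h.2⟩⟩
  · simp only [mem_sep_iff, ht, false_and, false_iff]
    exact fun hFx => ht ⟨hFx.1, hFx.2.trans_le (hF.ge_of_tendsto htop x)⟩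

lemma measurable_indicator_quantile (hlc : ∀ x, ContinuousWithinAt F (Iio x) x) :
    Measurable ((Ioo 0 m).indicator (quantile F)) := by
  refine measurable_of_Iio fun x => ?_
  rw [← inter_union_compl (_ ⁻¹' Iio x) (Ioo 0 m)]
  refine MeasurableSet.union ?_ ?_
  · rw [inter_comm]
    change MeasurableSet {t ∈ Ioo 0 m | _ < x}
    rw [setOf_indicator_quantile_lt hF hbot htop (hlc x)]
    exact measurableSet_Ioo
  · have : (Ioo 0 m).indicator (quantile F) ⁻¹' Iio x ∩ (Ioo 0 m)ᶜ =
        {_t | 0 < x} ∩ (Ioo 0 m)ᶜ := by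
      ext t
      simp +contextual [indicator_of_notMem]
    rw [this]
    exact (MeasurableSet.const _).inter measurableSet_Ioo.compl

lemma tendsto_quantile {ι : Type*} {l : Filter ι} {Fn : ι → ℝ → ℝ}
    (hlc : ∀ x, ContinuousWithinAt F (Iio x) x) (hFn : ∀ n, Monotone (Fn n))
    (hconv : ∀ x, ContinuousAt F x → Tendsto (fun n => Fn n x) l (𝓝 (F x)))
    (ht : t ∈ Ioo 0 m) (hQ : ContinuousWithinAt (quantile F) (Iio t) t) :
    Tendsto (fun n => quantile (Fn n) t) l (𝓝 (quantile F t)) := by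
  have below : ∀ a < quantile F t, ∃ x, a < x ∧ ContinuousAt F x ∧ F x < t := by
    intro a ha
    obtain ⟨t', hat', ht'⟩ :=
      ((hQ.eventually (lt_mem_nhds ha)).and (Ioo_mem_nhdsLT ht.1)).exists
    obtain ⟨x, hx, hFx⟩ := hF.exists_continuousAt_mem_Ioo hat'
    have : F x ≤ t' := le_of_not_gt fun h =>
      hx.2.not_gt ((quantile_lt_iff hF hbot htop (hlc x) ⟨ht'.1, ht'.2.trans ht.2⟩).2 h)
    exact ⟨x, hx.1, hFx, this.trans_lt ht'.2⟩
  have above : ∀ b > quantile F t, ∃ x < b, ContinuousAt F x ∧ t < F x := by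
    intro b hb
    obtain ⟨x, hx, hFx⟩ := hF.exists_continuousAt_mem_Ioo hb
    exact ⟨x, hx.2, hFx, (quantile_lt_iff hF hbot htop (hlc x) ht).1 hx.1⟩
  have squeeze : ∀ a b, a < quantile F t → quantile F t < b →
      ∀ᶠ n in l, quantile (Fn n) t ∈ Ioo a b := by
    intro a b ha hb
    obtain ⟨x₁, hax₁, hc₁, hx₁⟩ := below a ha
    obtain ⟨x₂, hx₂b, hc₂, hx₂⟩ := above b hb
    filter_upwards [(hconv x₁ hc₁).eventually (gt_mem_nhds hx₁),
      (hconv x₂ hc₂).eventually (lt_mem_nhds hx₂)] with n h₁ h₂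
    exact ⟨hax₁.trans_le (le_quantile (hFn n) h₁.le h₂),
      (quantile_le (hFn n) h₁.le h₂).trans_lt hx₂b⟩
  exact tendsto_order.2 ⟨fun a ha => (squeeze a _ ha (lt_add_one _)).mono fun _ h => h.1,
    fun b hb => (squeeze _ b (sub_one_lt _) hb).mono fun _ h => h.2⟩

lemma ae_tendsto_indicator_quantile {ι : Type*} {l : Filter ι} {Fn : ι → ℝ → ℝ}
    (hlc : ∀ x, ContinuousWithinAt F (Iio x) x) (hFn : ∀ n, Monotone (Fn n))
    (hconv : ∀ x, ContinuousAt F x → Tendsto (fun n => Fn n x) l (𝓝 (F x))) :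
    ∀ᵐ t ∂volume.restrict (Ioo 0 m), Tendsto (fun n => (Ioo 0 m).indicator (quantile (Fn n)) t) l
      (𝓝 ((Ioo 0 m).indicator (quantile F) t)) := by
  rw [ae_restrict_iff' measurableSet_Ioo]
  filter_upwards [(monotoneOn_quantile hF hbot htop).countable_not_continuousWithinAt_Iio.ae_notMem
    volume] with t hQ ht
  simp only [indicator_of_mem ht]
  refine tendsto_quantile hF hbot htop hlc hFn hconv ht ?_
  have hQ' : ContinuousWithinAt (quantile F) (Iio t ∩ Ioo 0 m) t := by
    rw [inter_comm]
    exact not_not.1 fun h => hQ ⟨ht, h⟩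
  exact (continuousWithinAt_inter (isOpen_Ioo.mem_nhds ht)).1 hQ'

end quantile

section distribQuantile

variable {X : Type*} [MeasurableSpace X] (μ : Measure X) [IsFiniteMeasure μ]

-- Outside `(0, μ X)`, `quantile` returns junk: `sInf` of an empty or unbounded-below set.
noncomputable def distribQuantile (h : X → ℝ) : ℝ → ℝ :=
  (Ioo 0 (μ univ).toReal).indicator (quantile (distribFun μ h))

variable {μ} {h : X → ℝ}

lemma measurable_distribQuantile (hh : Measurable h) : Measurable (distribQuantile μ h) :=
  measurable_indicator_quantile (monotone_distribFun μ h) (tendsto_distribFun_atBot μ h hh)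
    (tendsto_distribFun_atTop μ h) (continuousWithinAt_Iio_distribFun μ h)

lemma volume_setOf_distribQuantile_lt (hh : Measurable h) (x : ℝ) :
    volume {t ∈ Ioo 0 (μ univ).toReal | distribQuantile μ h t < x} = μ {ω | h ω < x} := by
  rw [distribQuantile, setOf_indicator_quantile_lt (monotone_distribFun μ h)
    (tendsto_distribFun_atBot μ h hh) (tendsto_distribFun_atTop μ h)
    (continuousWithinAt_Iio_distribFun μ h x), Real.volume_Ioo, sub_zero, ofReal_distribFun]

lemma ae_tendsto_distribQuantile {ι : Type*} {l : Filter ι} {f : X → ℝ} {fn : ι → X → ℝ}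
    (hf : Measurable f)
    (hconv : ∀ x, ContinuousAt (distribFun μ f) x →
      Tendsto (fun n => distribFun μ (fn n) x) l (𝓝 (distribFun μ f x))) :
    ∀ᵐ t ∂volume.restrict (Ioo 0 (μ univ).toReal),
      Tendsto (fun n => distribQuantile μ (fn n) t) l (𝓝 (distribQuantile μ f t)) :=
  ae_tendsto_indicator_quantile (monotone_distribFun μ f) (tendsto_distribFun_atBot μ f hf)
    (tendsto_distribFun_atTop μ f) (continuousWithinAt_Iio_distribFun μ f)
    (fun n => monotone_distribFun μ (fn n)) hconv

end distribQuantile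

end

/-- **Skorokhod's representation theorem.** If measurable functions `fₙ` on a
finite measure space `(X, Σ, μ)` converge in distribution to `f` (i.e. the
distribution functions converge at every continuity point of the distribution
function of `f`), then on the interval `I = (0, μ X)` with Lebesgue measure
there are measurable functions `gₙ, g` with the same distribution functions as
`fₙ, f`, such that `gₙ → g` almost everywhere on `I`. -/
theorem skorokhod_representation
    {X : Type*} [MeasurableSpace X] (μ : Measure X) [IsFiniteMeasure μ]
    (f : X → ℝ) (fn : ℕ → X → ℝ)
    (hf : Measurable f) (hfn : ∀ n, Measurable (fn n))
    (hdist : ∀ x : ℝ,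
      ContinuousAt (fun y : ℝ => (μ {ω | f ω < y}).toReal) x →
      Tendsto (fun n => (μ {ω | fn n ω < x}).toReal) atTop
        (nhds ((μ {ω | f ω < x}).toReal))) :
    ∃ (g : ℝ → ℝ) (gn : ℕ → ℝ → ℝ),
      Measurable g ∧ (∀ n, Measurable (gn n)) ∧
      (∀ᵐ t ∂(volume.restrict (Set.Ioo (0 : ℝ) (μ Set.univ).toReal)),
        Tendsto (fun n => gn n t) atTop (nhds (g t))) ∧
      (∀ (x : ℝ) (n : ℕ),
        μ {ω | fn n ω < x} =
          volume {t ∈ Set.Ioo (0 : ℝ) (μ Set.univ).toReal | gn n t < x}) ∧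
      (∀ x : ℝ,
        μ {ω | f ω < x} =
          volume {t ∈ Set.Ioo (0 : ℝ) (μ Set.univ).toReal | g t < x}) :=
  ⟨distribQuantile μ f, fun n => distribQuantile μ (fn n), measurable_distribQuantile hf,
    fun n => measurable_distribQuantile (hfn n), ae_tendsto_distribQuantile hf hdist,
    fun x n => (volume_setOf_distribQuantile_lt (hfn n) x).symm,
    fun x => (volume_setOf_distribQuantile_lt hf x).symm⟩
end

section
/- (Majorization passes to almost-everywhere limits) Let (g_k) and (h_k) be sequences of measurable functions on [0,1], uniformly bounded by a constant C, with g_k ≺ h_k for every k. If g_k → g almost everywhere and h_k → h almost everywhere on [0,1], then g ≺ h. -/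
open MeasureTheory Filter

/-- The decreasing rearrangement of a function `f` on a measure space `(X, μ)`
with `μ X = 1`: `f*(s) = inf {t : μ {f > t} ≤ s}`. -/
noncomputable def decRearr {X : Type*} [MeasurableSpace X] (μ : Measure X)
    (f : X → ℝ) : ℝ → ℝ :=
  fun s => sInf {t : ℝ | μ {ω | t < f ω} ≤ ENNReal.ofReal s}

/-- Majorization of functions: `g ≺ f` iff
`∫_0^s g* ≤ ∫_0^s f*` for all `0 ≤ s < 1` and `∫_0^1 g* = ∫_0^1 f*`. -/
def FnMajorizedBy {X Y : Type*} [MeasurableSpace X] [MeasurableSpace Y]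
    (ν : Measure Y) (g : Y → ℝ) (μ : Measure X) (f : X → ℝ) : Prop :=
  (∀ s ∈ Set.Ico (0 : ℝ) 1,
      ∫ z in Set.Ioo (0 : ℝ) s, decRearr ν g z ≤ ∫ z in Set.Ioo (0 : ℝ) s, decRearr μ f z) ∧
  ∫ z in Set.Ioo (0 : ℝ) 1, decRearr ν g z = ∫ z in Set.Ioo (0 : ℝ) 1, decRearr μ f z


/-!
The distribution functions `t ↦ μ {t < f_k}` converge to `t ↦ μ {t < f}` at every `t` that is not
an atom of `f`, and such `t` are dense. Since `f*` is essentially the inverse of the distribution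
function, this gives `f_k*(z) → f*(z)` at every point `z` where `f*` is left-continuous, i.e. at
all but countably many `z` because `f*` is antitone. The rearrangements are bounded by `C`, so
dominated convergence passes the partial integrals `∫_0^s f_k*` to the limit, and the
inequalities and the equality defining `g_k ≺ h_k` survive.
-/

open scoped Topology

namespace MeasureTheory

variable {X : Type*} [MeasurableSpace X] {μ : Measure X} {f : X → ℝ} {C s t : ℝ}

theorem decRearr_congr_ae {f' : X → ℝ} (hf : f =ᵐ[μ] f') : decRearr μ f = decRearr μ f' := by
  funext s
  have hlevel : ∀ t, μ {ω | t < f ω} = μ {ω | t < f' ω} := fun t =>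
    measure_congr (hf.mono fun ω hω => congrArg (t < ·) hω)
  simp only [decRearr, hlevel]

theorem measure_lt_le_of_ae_abs_le (hC : ∀ᵐ ω ∂μ, |f ω| ≤ C) (s : ℝ) :
    μ {ω | C < f ω} ≤ ENNReal.ofReal s := by
  have hnull : μ {ω | C < f ω} = 0 :=
    measure_eq_zero_iff_ae_notMem.2 <| hC.mono fun _ hω => not_lt.2 (abs_le.1 hω).2
  rw [hnull]
  exact zero_le

-- For `s ≥ 1` the set is all of `ℝ`, so `decRearr μ f s` is the junk value `sInf ℝ = 0`.
theorem neg_mem_lowerBounds_decRearr_set [IsProbabilityMeasure μ] (hC : ∀ᵐ ω ∂μ, |f ω| ≤ C)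
    (hs : s < 1) : -C ∈ lowerBounds {t : ℝ | μ {ω | t < f ω} ≤ ENNReal.ofReal s} := by
  intro t ht
  by_contra! htC
  have hfull : μ {ω | t < f ω} = 1 := by
    rw [← measure_univ (μ := μ)]
    exact measure_congr <| hC.mono fun ω hω => eq_true (htC.trans_le (abs_le.1 hω).1)
  exact (ENNReal.ofReal_lt_one.2 hs).not_ge (hfull ▸ ht)

theorem decRearr_le_of_measure_le [IsProbabilityMeasure μ] (hC : ∀ᵐ ω ∂μ, |f ω| ≤ C)
    (hs : s < 1) (ht : μ {ω | t < f ω} ≤ ENNReal.ofReal s) : decRearr μ f s ≤ t :=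
  csInf_le ⟨-C, neg_mem_lowerBounds_decRearr_set hC hs⟩ ht

theorem measure_lt_le_of_decRearr_lt (hC : ∀ᵐ ω ∂μ, |f ω| ≤ C) (ht : decRearr μ f s < t) :
    μ {ω | t < f ω} ≤ ENNReal.ofReal s := by
  obtain ⟨u, hu, hut⟩ := exists_lt_of_csInf_lt ⟨C, measure_lt_le_of_ae_abs_le hC s⟩ ht
  exact (measure_mono fun ω hω => hut.trans hω).trans hu

theorem le_decRearr_of_lt_measure (hC : ∀ᵐ ω ∂μ, |f ω| ≤ C)
    (ht : ENNReal.ofReal s < μ {ω | t < f ω}) : t ≤ decRearr μ f s := by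
  contrapose! ht
  exact measure_lt_le_of_decRearr_lt hC ht

theorem decRearr_mem_Icc [IsProbabilityMeasure μ] (hC : ∀ᵐ ω ∂μ, |f ω| ≤ C) (hs : s < 1) :
    decRearr μ f s ∈ Set.Icc (-C) C := by
  have hC_mem := measure_lt_le_of_ae_abs_le hC s
  exact ⟨le_csInf ⟨C, hC_mem⟩ (neg_mem_lowerBounds_decRearr_set hC hs),
    decRearr_le_of_measure_le hC hs hC_mem⟩

theorem decRearr_antitoneOn [IsProbabilityMeasure μ] (hC : ∀ᵐ ω ∂μ, |f ω| ≤ C) :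
    AntitoneOn (decRearr μ f) (Set.Iio 1) := fun s₁ _ _ hs₂ h12 =>
  csInf_le_csInf ⟨-C, neg_mem_lowerBounds_decRearr_set hC hs₂⟩
    ⟨C, measure_lt_le_of_ae_abs_le hC s₁⟩ fun _ ht => ht.trans (ENNReal.ofReal_le_ofReal h12)

theorem dense_setOf_measure_eq_zero [SFinite μ] (hf : Measurable f) :
    Dense {t : ℝ | μ {ω | f ω = t} = 0} := by
  convert (Measure.countable_meas_level_set_pos (μ := μ) hf).dense_compl ℝ using 1
  ext t
  simp [pos_iff_ne_zero]

theorem tendsto_measure_lt_of_ae_tendsto [IsFiniteMeasure μ] {ι : Type*} {L : Filter ι}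
    [L.IsCountablyGenerated] {fk : ι → X → ℝ} (hmeas : ∀ k, Measurable (fk k))
    (hf : Measurable f) (htend : ∀ᵐ ω ∂μ, Tendsto (fun k => fk k ω) L (𝓝 (f ω)))
    (ht : μ {ω | f ω = t} = 0) :
    Tendsto (fun k => μ {ω | t < fk k ω}) L (𝓝 (μ {ω | t < f ω})) := by
  refine tendsto_measure_of_ae_tendsto_indicator_of_isFiniteMeasure L
    (measurableSet_lt measurable_const hf) (fun k => measurableSet_lt measurable_const (hmeas k)) ?_
  filter_upwards [htend, measure_eq_zero_iff_ae_notMem.1 ht] with ω hω hne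
  rcases Ne.lt_or_gt hne with hlt | hgt
  · exact (hω.eventually (gt_mem_nhds hlt)).mono fun _ hk =>
      iff_of_false (not_lt.2 hk.le) (not_lt.2 hlt.le)
  · exact (hω.eventually (lt_mem_nhds hgt)).mono fun _ hk => iff_of_true hk hgt

theorem tendsto_decRearr_of_continuousWithinAt [IsProbabilityMeasure μ] {fk : ℕ → X → ℝ}
    (hmeas : ∀ k, Measurable (fk k)) (hf : Measurable f) (hbd : ∀ k, ∀ᵐ ω ∂μ, |fk k ω| ≤ C)
    (hbf : ∀ᵐ ω ∂μ, |f ω| ≤ C) (htend : ∀ᵐ ω ∂μ, Tendsto (fun k => fk k ω) atTop (𝓝 (f ω)))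
    {z : ℝ} (hz : z ∈ Set.Ioo 0 1) (hcont : ContinuousWithinAt (decRearr μ f) (Set.Iio z) z) :
    Tendsto (fun k => decRearr μ (fk k) z) atTop (𝓝 (decRearr μ f z)) := by
  have hdense := dense_setOf_measure_eq_zero (μ := μ) hf
  have hdist (t : ℝ) (ht : μ {ω | f ω = t} = 0) :=
    tendsto_measure_lt_of_ae_tendsto hmeas hf htend ht
  refine tendsto_order.2 ⟨fun a ha => ?_, fun b hb => ?_⟩
  · obtain ⟨t, ht, hat, htz⟩ := hdense.exists_between ha
    have hlarge : ENNReal.ofReal z < μ {ω | t < f ω} := by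
      contrapose! htz
      exact decRearr_le_of_measure_le hbf hz.2 htz
    filter_upwards [(hdist t ht).eventually_const_lt hlarge] with k hk
    exact hat.trans_le (le_decRearr_of_lt_measure (hbd k) hk)
  · obtain ⟨s, hsb, hs⟩ := ((hcont.eventually_lt_const hb).and (Ioo_mem_nhdsLT hz.1)).exists
    obtain ⟨t, ht, hst, htb⟩ := hdense.exists_between hsb
    have hsmall : μ {ω | t < f ω} < ENNReal.ofReal z :=
      (measure_lt_le_of_decRearr_lt hbf hst).trans_lt ((ENNReal.ofReal_lt_ofReal_iff hz.1).2 hs.2)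
    filter_upwards [(hdist t ht).eventually_lt_const hsmall] with k hk
    exact (decRearr_le_of_measure_le (hbd k) hz.2 hk.le).trans_lt htb

theorem tendsto_setIntegral_decRearr [IsProbabilityMeasure μ] {fk : ℕ → X → ℝ}
    (hmeas : ∀ k, Measurable (fk k)) (hbd : ∀ k, ∀ᵐ ω ∂μ, |fk k ω| ≤ C)
    (htend : ∀ᵐ ω ∂μ, Tendsto (fun k => fk k ω) atTop (𝓝 (f ω))) (hs : s ≤ 1) :
    Tendsto (fun k => ∫ z in Set.Ioo 0 s, decRearr μ (fk k) z) atTop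
      (𝓝 (∫ z in Set.Ioo 0 s, decRearr μ f z)) := by
  obtain ⟨f', hf', hff'⟩ :=
    aemeasurable_of_tendsto_metrizable_ae atTop (fun k => (hmeas k).aemeasurable) htend
  rw [decRearr_congr_ae hff']
  replace htend : ∀ᵐ ω ∂μ, Tendsto (fun k => fk k ω) atTop (𝓝 (f' ω)) := by
    filter_upwards [htend, hff'] with ω hω hfω
    rwa [← hfω]
  have hbf : ∀ᵐ ω ∂μ, |f' ω| ≤ C := by
    filter_upwards [htend, ae_all_iff.2 hbd] with ω hω hbdω
    exact le_of_tendsto hω.abs (Eventually.of_forall hbdω)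
  have hsub : Set.Ioo 0 s ⊆ Set.Iio 1 := fun z hz => hz.2.trans_le hs
  have hleft : ∀ᵐ z ∂volume.restrict (Set.Ioo 0 s),
      ContinuousWithinAt (decRearr μ f') (Set.Iio z) z := by
    have hnull := ((decRearr_antitoneOn hbf).countable_not_continuousWithinAt).measure_zero volume
    filter_upwards [ae_restrict_of_ae (measure_eq_zero_iff_ae_notMem.1 hnull),
      ae_restrict_mem measurableSet_Ioo] with z hz_cont hz
    have hcont : ContinuousWithinAt (decRearr μ f') (Set.Iio 1) z :=
      not_not.1 fun h => hz_cont ⟨hsub hz, h⟩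
    exact hcont.mono (Set.Iio_subset_Iio (hsub hz).le)
  refine tendsto_integral_of_dominated_convergence (fun _ => C)
    (fun k => (aemeasurable_restrict_of_antitoneOn measurableSet_Ioo
      ((decRearr_antitoneOn (hbd k)).mono hsub)).aestronglyMeasurable)
    (integrableOn_const measure_Ioo_lt_top.ne) (fun k => ?_) ?_
  · filter_upwards [ae_restrict_mem measurableSet_Ioo] with z hz
    exact Real.norm_eq_abs _ ▸ abs_le.2 (decRearr_mem_Icc (hbd k) (hsub hz))
  · filter_upwards [hleft, ae_restrict_mem measurableSet_Ioo] with z hcont hz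
    exact tendsto_decRearr_of_continuousWithinAt hmeas hf' hbd hbf htend ⟨hz.1, hsub hz⟩ hcont

end MeasureTheory

open MeasureTheory

theorem FnMajorizedBy.of_tendsto_ae {X Y : Type*} [MeasurableSpace X] [MeasurableSpace Y]
    {ν : Measure Y} {μ : Measure X} [IsProbabilityMeasure ν] [IsProbabilityMeasure μ]
    {gk : ℕ → Y → ℝ} {fk : ℕ → X → ℝ} {g : Y → ℝ} {f : X → ℝ} {C : ℝ}
    (hgmeas : ∀ k, Measurable (gk k)) (hfmeas : ∀ k, Measurable (fk k))
    (hgbd : ∀ k, ∀ᵐ y ∂ν, |gk k y| ≤ C) (hfbd : ∀ k, ∀ᵐ x ∂μ, |fk k x| ≤ C)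
    (hmaj : ∀ k, FnMajorizedBy ν (gk k) μ (fk k))
    (hg : ∀ᵐ y ∂ν, Tendsto (fun k => gk k y) atTop (𝓝 (g y)))
    (hf : ∀ᵐ x ∂μ, Tendsto (fun k => fk k x) atTop (𝓝 (f x))) :
    FnMajorizedBy ν g μ f := by
  have hg_int {s : ℝ} (hs : s ≤ 1) := tendsto_setIntegral_decRearr hgmeas hgbd hg hs
  have hf_int {s : ℝ} (hs : s ≤ 1) := tendsto_setIntegral_decRearr hfmeas hfbd hf hs
  exact ⟨fun s hs => le_of_tendsto_of_tendsto' (hg_int hs.2.le) (hf_int hs.2.le)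
      fun k => (hmaj k).1 s hs,
    tendsto_nhds_unique ((hg_int le_rfl).congr fun k => (hmaj k).2) (hf_int le_rfl)⟩

instance : IsProbabilityMeasure (volume.restrict (Set.Icc (0 : ℝ) 1)) :=
  ⟨by simp⟩

/-- **Majorization passes to a.e. limits**: if `g_k ≺ h_k` for uniformly bounded
measurable functions on `[0,1]` and `g_k → g`, `h_k → h` almost everywhere,
then `g ≺ h`. -/
theorem fnMajorizedBy_of_tendsto_ae
    (gk hk : ℕ → ℝ → ℝ) (g h : ℝ → ℝ) (C : ℝ)
    (hgmeas : ∀ k, Measurable (gk k)) (hhmeas : ∀ k, Measurable (hk k))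
    (hgbdd : ∀ k, ∀ t ∈ Set.Icc (0 : ℝ) 1, |gk k t| ≤ C)
    (hhbdd : ∀ k, ∀ t ∈ Set.Icc (0 : ℝ) 1, |hk k t| ≤ C)
    (hmaj : ∀ k, FnMajorizedBy (volume.restrict (Set.Icc (0 : ℝ) 1)) (gk k)
      (volume.restrict (Set.Icc (0 : ℝ) 1)) (hk k))
    (hgtendsto : ∀ᵐ t ∂(volume.restrict (Set.Icc (0 : ℝ) 1)),
      Tendsto (fun k => gk k t) atTop (nhds (g t)))
    (hhtendsto : ∀ᵐ t ∂(volume.restrict (Set.Icc (0 : ℝ) 1)),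
      Tendsto (fun k => hk k t) atTop (nhds (h t))) :
    FnMajorizedBy (volume.restrict (Set.Icc (0 : ℝ) 1)) g
      (volume.restrict (Set.Icc (0 : ℝ) 1)) h :=
  FnMajorizedBy.of_tendsto_ae hgmeas hhmeas
    (fun k => (ae_restrict_mem measurableSet_Icc).mono (hgbdd k))
    (fun k => (ae_restrict_mem measurableSet_Icc).mono (hhbdd k)) hmaj hgtendsto hhtendsto
end
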